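/- Let P be a μ-invariant Markov kernel with positive weak conductance profile Φ(v) := inf{(μ⊗P)(A×Aᶜ)/μ(A) : v ≤ μ(A) ≤ 1/2} for v ∈ (0,1/2]. Then for every measurable function f with values in [0,1], ess sup_μ f = 1 and μ({f = 0}) ≥ 1/2, and every r ∈ (0,1/2): μ(f) − r ≤ α₁(r)·𝓔₁(P,f), where α₁(r) := sup_{r ≤ s ≤ 1/2} (s − r)/(s·Φ(s)). -/

import Mathlib

open MeasureTheory ProbabilityTheory
open scoped ENNReal

/-- The weak conductance profile of a `μ`-invariant Markov kernel `P`: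
`Φ(v) = inf {(μ ⊗ P)(A × Aᶜ)/μ(A) : v ≤ μ(A) ≤ 1/2}`. -/
noncomputable def weakConductanceProfile {E : Type*} [MeasurableSpace E]
    (μ : Measure E) (P : Kernel E E) [IsMarkovKernel P] (v : ℝ) : ℝ :=
  sInf {y : ℝ | ∃ A : Set E, MeasurableSet A ∧
    v ≤ (μ A).toReal ∧ (μ A).toReal ≤ 1 / 2 ∧
    y = ((μ.compProd P) (A ×ˢ Aᶜ)).toReal / (μ A).toReal}

/-!
Write `ν = μ ⊗ P` and `F_t = {f > t}`. Slicing `(f x - f y)⁺ = |[f y, f x)|` in `t` gives the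
co-area formula `∫ (f x - f y)⁺ dν = ∫ ν(F_t × F_tᶜ) dt`; invariance of `μ` makes
`ν(Aᶜ × A) = ν(A × Aᶜ)`, so both halves of `|f y - f x|` contribute equally and
`𝓔₁(P, f) = ∫ ν(F_t × F_tᶜ) dt`. On the other side `μ(f) = ∫₀¹ μ(F_t) dt` with `μ(F_t) ≤ 1/2` for
`t > 0`. For `s = μ(F_t) > r` the definition of `Φ` and of `α₁` give
`s - r ≤ α₁(r) s Φ(s) ≤ α₁(r) ν(F_t × F_tᶜ)`, so `μ(F_t) ≤ r + α₁(r) ν(F_t × F_tᶜ)` for every level,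
and integrating over `t ∈ (0, 1]` proves the inequality.
-/

open Set

section Coarea

theorem lintegral_ofReal_sub_eq_lintegral_measure {γ : Type*} [MeasurableSpace γ]
    (ν : Measure γ) [SFinite ν] {u v : γ → ℝ} (hu : Measurable u) (hv : Measurable v) :
    ∫⁻ p, ENNReal.ofReal (u p - v p) ∂ν = ∫⁻ t, ν {p | v p ≤ t ∧ t < u p} := by
  have hS : MeasurableSet {q : γ × ℝ | v q.1 ≤ q.2 ∧ q.2 < u q.1} :=
    (measurableSet_le (hv.comp measurable_fst) measurable_snd).inter
      (measurableSet_lt measurable_snd (hu.comp measurable_fst))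
  calc ∫⁻ p, ENNReal.ofReal (u p - v p) ∂ν = ∫⁻ p, volume (Ico (v p) (u p)) ∂ν := by
        simp only [Real.volume_Ico]
    _ = (ν.prod volume) {q : γ × ℝ | v q.1 ≤ q.2 ∧ q.2 < u q.1} := (Measure.prod_apply hS).symm
    _ = ∫⁻ t, ν {p | v p ≤ t ∧ t < u p} := Measure.prod_apply_symm hS

variable {E : Type*} [MeasurableSpace E] {f : E → ℝ}

theorem lintegral_ofReal_fst_sub_snd (ν : Measure (E × E)) [SFinite ν] (hf : Measurable f) :
    ∫⁻ p, ENNReal.ofReal (f p.1 - f p.2) ∂ν = ∫⁻ t, ν ({x | t < f x} ×ˢ {x | t < f x}ᶜ) := by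
  rw [lintegral_ofReal_sub_eq_lintegral_measure ν (u := fun p => f p.1) (v := fun p => f p.2)
    (by fun_prop) (by fun_prop)]
  congr! 3 with t
  ext p
  simp [and_comm]

end Coarea

section Energy

variable {E : Type*} [MeasurableSpace E] (μ : Measure E) [IsFiniteMeasure μ]
  (P : Kernel E E) [IsMarkovKernel P]

/-- Both sides complete `∫⁻ x in A, P x A ∂μ` to `μ A`: the left one by invariance, the right
one because each `P x` is a probability measure. -/
theorem compProd_compl_prod_eq_prod_compl {A : Set E} (hA : MeasurableSet A)
    (hinv : ∫⁻ x, P x A ∂μ = μ A) :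
    μ.compProd P (Aᶜ ×ˢ A) = μ.compProd P (A ×ˢ Aᶜ) := by
  rw [Measure.compProd_apply_prod hA.compl hA, Measure.compProd_apply_prod hA hA.compl]
  have hin_out : ∫⁻ x in A, P x A ∂μ + ∫⁻ x in Aᶜ, P x A ∂μ = μ A := by
    rw [lintegral_add_compl _ hA, hinv]
  have hin_in : ∫⁻ x in A, P x A ∂μ + ∫⁻ x in A, P x Aᶜ ∂μ = μ A := by
    rw [← lintegral_add_left (P.measurable_coe hA), ← setLIntegral_one]
    exact setLIntegral_congr_fun hA fun x _ => by
      rw [measure_add_measure_compl hA, measure_univ]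
  have hfin : ∫⁻ x in A, P x A ∂μ ≠ ∞ :=
    ne_top_of_le_ne_top (measure_ne_top μ A)
      ((setLIntegral_mono' hA fun _ _ => prob_le_one).trans_eq (setLIntegral_one A))
  exact (ENNReal.add_right_inj hfin).mp (hin_out.trans hin_in.symm)

theorem ofReal_abs_sub_eq_add (a b : ℝ) :
    ENNReal.ofReal |b - a| = ENNReal.ofReal (a - b) + ENNReal.ofReal (b - a) := by
  rcases le_total a b with h | h
  · rw [abs_of_nonneg (sub_nonneg.2 h), ENNReal.ofReal_of_nonpos (sub_nonpos.2 h), zero_add]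
  · rw [abs_of_nonpos (sub_nonpos.2 h), neg_sub, ENNReal.ofReal_of_nonpos (sub_nonpos.2 h),
      add_zero]

variable {μ P} {f : E → ℝ}

theorem lintegral_ofReal_abs_sub_eq_two_mul
    (hinv : ∀ B : Set E, MeasurableSet B → ∫⁻ x, P x B ∂μ = μ B) (hf : Measurable f) :
    ∫⁻ p, ENNReal.ofReal |f p.2 - f p.1| ∂(μ.compProd P)
      = 2 * ∫⁻ t, μ.compProd P ({x | t < f x} ×ˢ {x | t < f x}ᶜ) := by
  have hF : ∀ t : ℝ, MeasurableSet {x | t < f x} := fun t => measurableSet_lt measurable_const hf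
  simp_rw [ofReal_abs_sub_eq_add]
  rw [lintegral_add_left (by fun_prop), lintegral_ofReal_fst_sub_snd _ hf,
    lintegral_ofReal_sub_eq_lintegral_measure (μ.compProd P) (u := fun p => f p.2) (v := fun p => f p.1)
      (by fun_prop) (by fun_prop), two_mul]
  congr 1
  refine lintegral_congr fun t => ?_
  rw [← compProd_compl_prod_eq_prod_compl μ P (hF t) (hinv _ (hF t))]
  congr 1
  ext p
  simp

theorem lintegral_cut_eq_ofReal_half_energy
    (hinv : ∀ B : Set E, MeasurableSet B → ∫⁻ x, P x B ∂μ = μ B) (hf : Measurable f)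
    (hf01 : ∀ x, f x ∈ Icc (0 : ℝ) 1) :
    ∫⁻ t, μ.compProd P ({x | t < f x} ×ˢ {x | t < f x}ᶜ)
      = ENNReal.ofReal ((1 / 2) * ∫ x, ∫ y, |f y - f x| ∂(P x) ∂μ) := by
  have hbound : ∀ p : E × E, ‖|f p.2 - f p.1|‖ ≤ 1 := fun p => by
    rw [Real.norm_eq_abs, abs_abs, abs_le]
    constructor <;> linarith [(hf01 p.1).1, (hf01 p.1).2, (hf01 p.2).1, (hf01 p.2).2]
  have hint : Integrable (fun p : E × E => |f p.2 - f p.1|) (μ.compProd P) :=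
    (integrable_const 1).mono' (by fun_prop) (ae_of_all _ hbound)
  rw [← Measure.integral_compProd hint, ENNReal.ofReal_mul (by norm_num),
    ofReal_integral_eq_lintegral_ofReal hint (ae_of_all _ fun _ => abs_nonneg _),
    lintegral_ofReal_abs_sub_eq_two_mul hinv hf, ← mul_assoc, ENNReal.ofReal_div_of_pos two_pos]
  simp [ENNReal.inv_mul_cancel]

end Energy

section LevelSets

variable {α : Type*} [MeasurableSpace α] {μ : Measure α} {f : α → ℝ}

theorem measure_lt_le_half [IsProbabilityMeasure μ] (hf : Measurable f)
    (hzero : (1 / 2 : ℝ≥0∞) ≤ μ {x | f x = 0}) {t : ℝ} (ht : 0 ≤ t) :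
    μ {x | t < f x} ≤ 1 / 2 :=
  calc μ {x | t < f x} ≤ μ {x | f x = 0}ᶜ :=
        measure_mono fun x (hx : t < f x) (h0 : f x = 0) => by linarith
    _ = 1 - μ {x | f x = 0} := prob_compl_eq_one_sub (hf (measurableSet_singleton 0))
    _ ≤ 1 - 1 / 2 := tsub_le_tsub_left hzero 1
    _ = 1 / 2 := ENNReal.sub_half ENNReal.one_ne_top

theorem lintegral_ofReal_eq_setLIntegral_Ioc (hf : Measurable f)
    (hf01 : ∀ x, f x ∈ Icc (0 : ℝ) 1) :
    ∫⁻ x, ENNReal.ofReal (f x) ∂μ = ∫⁻ t in Ioc 0 1, μ {x | t < f x} := by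
  have hempty : ∀ t ∈ Ioi (1 : ℝ), μ {x | t < f x} = 0 := fun t (ht : 1 < t) => by
    rw [measure_eq_zero_iff_ae_notMem]
    exact ae_of_all _ fun x (hx : t < f x) => by linarith [(hf01 x).2]
  rw [lintegral_eq_lintegral_meas_lt μ (ae_of_all _ fun x => (hf01 x).1) hf.aemeasurable,
    ← Ioc_union_Ioi_eq_Ioi zero_le_one, lintegral_union measurableSet_Ioi (Ioc_disjoint_Ioi le_rfl),
    setLIntegral_congr_fun measurableSet_Ioi hempty, lintegral_zero, add_zero]

theorem lintegral_ofReal_le_of_measure_lt_le (hf : Measurable f)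
    (hf01 : ∀ x, f x ∈ Icc (0 : ℝ) 1) {c d : ℝ≥0∞} (hd : d ≠ ∞) {g : ℝ → ℝ≥0∞}
    (hlevel : ∀ t ∈ Ioc (0 : ℝ) 1, μ {x | t < f x} ≤ c + d * g t) :
    ∫⁻ x, ENNReal.ofReal (f x) ∂μ ≤ c + d * ∫⁻ t, g t := by
  rw [lintegral_ofReal_eq_setLIntegral_Ioc hf hf01]
  calc ∫⁻ t in Ioc 0 1, μ {x | t < f x} ≤ ∫⁻ t in Ioc 0 1, (c + d * g t) :=
        setLIntegral_mono' measurableSet_Ioc hlevel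
    _ = c + d * ∫⁻ t in Ioc 0 1, g t := by
        rw [lintegral_add_left measurable_const, setLIntegral_const, lintegral_const_mul' _ _ hd,
          Real.volume_Ioc, sub_zero, ENNReal.ofReal_one, mul_one]
    _ ≤ c + d * ∫⁻ t, g t := by gcongr; exact Measure.restrict_le_self

end LevelSets

section Conductance

variable {E : Type*} [MeasurableSpace E] {μ : Measure E} {P : Kernel E E} [IsMarkovKernel P]

theorem mul_weakConductanceProfile_le {A : Set E} (hA : MeasurableSet A)
    (hA2 : (μ A).toReal ≤ 1 / 2) :
    (μ A).toReal * weakConductanceProfile μ P (μ A).toReal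
      ≤ (μ.compProd P (A ×ˢ Aᶜ)).toReal := by
  have hle : weakConductanceProfile μ P (μ A).toReal
      ≤ (μ.compProd P (A ×ˢ Aᶜ)).toReal / (μ A).toReal := by
    refine csInf_le ⟨0, ?_⟩ ⟨A, hA, le_rfl, hA2, rfl⟩
    rintro y ⟨B, -, -, -, rfl⟩
    positivity
  rcases eq_or_lt_of_le (ENNReal.toReal_nonneg : 0 ≤ (μ A).toReal) with h0 | hpos
  · rw [← h0, zero_mul]
    positivity
  · calc (μ A).toReal * weakConductanceProfile μ P (μ A).toReal
          ≤ (μ A).toReal * ((μ.compProd P (A ×ˢ Aᶜ)).toReal / (μ A).toReal) := by gcongr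
      _ = (μ.compProd P (A ×ˢ Aᶜ)).toReal := mul_div_cancel₀ _ hpos.ne'

theorem weakConductanceProfile_mono {v w : ℝ} (hvw : v ≤ w)
    (hw : 0 < weakConductanceProfile μ P w) :
    weakConductanceProfile μ P v ≤ weakConductanceProfile μ P w := by
  refine csInf_le_csInf ⟨0, ?_⟩ ?_ ?_
  · rintro y ⟨B, -, -, -, rfl⟩
    positivity
  · by_contra hempty
    rw [not_nonempty_iff_eq_empty] at hempty
    rw [weakConductanceProfile, hempty, Real.sInf_empty] at hw
    exact hw.false
  · rintro y ⟨B, hB, hwB, hB2, rfl⟩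
    exact ⟨B, hB, hvw.trans hwB, hB2, rfl⟩

variable (μ P) in
/-- The function `α₁` of the statement. -/
noncomputable def l1WeakPoincareRate (r : ℝ) : ℝ :=
  sSup ((fun s => (s - r) / (s * weakConductanceProfile μ P s)) '' Icc r (1 / 2))

variable {r : ℝ}

theorem bddAbove_l1WeakPoincareRate (hr0 : 0 < r) (hr : r ≤ 1 / 2)
    (hΦpos : ∀ v ∈ Ioc (0 : ℝ) (1 / 2), 0 < weakConductanceProfile μ P v) :
    BddAbove ((fun s => (s - r) / (s * weakConductanceProfile μ P s)) '' Icc r (1 / 2)) := by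
  refine ⟨(1 / 2 - r) / (r * weakConductanceProfile μ P r), ?_⟩
  rintro _ ⟨s, ⟨hrs, hs⟩, rfl⟩
  have hΦr := hΦpos r ⟨hr0, hr⟩
  have hΦs := hΦpos s ⟨hr0.trans_le hrs, hs⟩
  exact div_le_div₀ (by linarith) (by linarith) (by positivity)
    (mul_le_mul hrs (weakConductanceProfile_mono hrs hΦs) hΦr.le (hr0.trans_le hrs).le)

theorem sub_le_l1WeakPoincareRate_mul (hr0 : 0 < r)
    (hΦpos : ∀ v ∈ Ioc (0 : ℝ) (1 / 2), 0 < weakConductanceProfile μ P v)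
    {s : ℝ} (hs : s ∈ Icc r (1 / 2)) :
    s - r ≤ l1WeakPoincareRate μ P r * (s * weakConductanceProfile μ P s) := by
  have hpos : 0 < s * weakConductanceProfile μ P s :=
    mul_pos (hr0.trans_le hs.1) (hΦpos s ⟨hr0.trans_le hs.1, hs.2⟩)
  rw [← div_le_iff₀ hpos]
  exact le_csSup (bddAbove_l1WeakPoincareRate hr0 (hs.1.trans hs.2) hΦpos) ⟨s, hs, rfl⟩

theorem l1WeakPoincareRate_nonneg (hr0 : 0 < r) (hr : r ≤ 1 / 2)
    (hΦpos : ∀ v ∈ Ioc (0 : ℝ) (1 / 2), 0 < weakConductanceProfile μ P v) :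
    0 ≤ l1WeakPoincareRate μ P r := by
  simpa [l1WeakPoincareRate] using
    le_csSup (bddAbove_l1WeakPoincareRate hr0 hr hΦpos) ⟨r, ⟨le_rfl, hr⟩, rfl⟩

theorem measure_le_add_l1WeakPoincareRate_mul [IsFiniteMeasure μ] (hr0 : 0 < r) (hr : r ≤ 1 / 2)
    (hΦpos : ∀ v ∈ Ioc (0 : ℝ) (1 / 2), 0 < weakConductanceProfile μ P v)
    {A : Set E} (hA : MeasurableSet A) (hA2 : μ A ≤ 1 / 2) :
    μ A ≤ ENNReal.ofReal r
      + ENNReal.ofReal (l1WeakPoincareRate μ P r) * μ.compProd P (A ×ˢ Aᶜ) := by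
  set α := l1WeakPoincareRate μ P r
  set s := (μ A).toReal
  set X := (μ.compProd P (A ×ˢ Aᶜ)).toReal
  have hα := l1WeakPoincareRate_nonneg hr0 hr hΦpos
  have hs2 : s ≤ 1 / 2 := by
    simpa using ENNReal.toReal_mono (by norm_num) hA2
  have hsX : s ≤ r + α * X := by
    rcases le_or_gt s r with hsr | hrs
    · nlinarith [ENNReal.toReal_nonneg (a := μ.compProd P (A ×ˢ Aᶜ))]
    · have := sub_le_l1WeakPoincareRate_mul hr0 hΦpos ⟨hrs.le, hs2⟩
      have := mul_le_mul_of_nonneg_left (mul_weakConductanceProfile_le (P := P) hA hs2) hα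
      linarith
  calc μ A = ENNReal.ofReal s := (ENNReal.ofReal_toReal (measure_ne_top μ A)).symm
    _ ≤ ENNReal.ofReal (r + α * X) := ENNReal.ofReal_le_ofReal hsX
    _ = ENNReal.ofReal r + ENNReal.ofReal α * μ.compProd P (A ×ˢ Aᶜ) := by
        rw [ENNReal.ofReal_add hr0.le (by positivity), ENNReal.ofReal_mul hα,
          ENNReal.ofReal_toReal (measure_ne_top _ _)]

end Conductance

theorem L1_WPI_from_weak_conductance_general
    {E : Type*} [MeasurableSpace E] (μ : Measure E) [IsProbabilityMeasure μ]
    (P : Kernel E E) [IsMarkovKernel P]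
    (hinv : ∀ B : Set E, MeasurableSet B → ∫⁻ x, P x B ∂μ = μ B)
    (hΦpos : ∀ v ∈ Set.Ioc (0 : ℝ) (1 / 2), 0 < weakConductanceProfile μ P v)
    (f : E → ℝ) (hf : Measurable f) (hf01 : ∀ x, f x ∈ Set.Icc (0 : ℝ) 1)
    (hzero : (1 / 2 : ℝ≥0∞) ≤ μ {x | f x = 0}) :
    ∀ r ∈ Set.Ioo (0 : ℝ) (1 / 2),
      (∫ x, f x ∂μ) - r
        ≤ sSup ((fun s => (s - r) / (s * weakConductanceProfile μ P s)) ''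
              Set.Icc r (1 / 2))
          * ((1 / 2) * ∫ x, ∫ y, |f y - f x| ∂(P x) ∂μ) := by
  rintro r ⟨hr0, hr⟩
  change _ ≤ l1WeakPoincareRate μ P r * _
  set energy := (1 / 2) * ∫ x, ∫ y, |f y - f x| ∂(P x) ∂μ
  have hα := l1WeakPoincareRate_nonneg hr0 hr.le hΦpos
  have henergy : 0 ≤ energy := by positivity
  have hmass : ∫⁻ x, ENNReal.ofReal (f x) ∂μ
      ≤ ENNReal.ofReal (r + l1WeakPoincareRate μ P r * energy) := by
    rw [ENNReal.ofReal_add hr0.le (by positivity), ENNReal.ofReal_mul hα,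
      ← lintegral_cut_eq_ofReal_half_energy hinv hf hf01]
    exact lintegral_ofReal_le_of_measure_lt_le hf hf01 ENNReal.ofReal_ne_top fun t ht =>
      measure_le_add_l1WeakPoincareRate_mul hr0 hr.le hΦpos (measurableSet_lt measurable_const hf)
        (measure_lt_le_half hf hzero ht.1.le)
  rw [integral_eq_lintegral_of_nonneg_ae (ae_of_all _ fun x => (hf01 x).1)
    hf.aestronglyMeasurable, sub_le_iff_le_add']
  exact ENNReal.toReal_le_of_le_ofReal (by positivity) hmass

/-- if `P` has positive weak conductance profile `Φ`, then for every
measurable `f : E → [0,1]` with `ess sup_μ f = 1` and `μ({f = 0}) ≥ 1/2`, and every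
`r ∈ (0, 1/2)`, `μ(f) - r ≤ α₁(r)·𝓔₁(P, f)` where
`α₁(r) = sup_{r ≤ s ≤ 1/2} (s - r)/(s·Φ(s))`. -/
theorem L1_WPI_from_weak_conductance
    {E : Type*} [MeasurableSpace E] (μ : Measure E) [IsProbabilityMeasure μ]
    (P : Kernel E E) [IsMarkovKernel P]
    (hinv : ∀ B : Set E, MeasurableSet B → ∫⁻ x, P x B ∂μ = μ B)
    (hΦpos : ∀ v ∈ Set.Ioc (0 : ℝ) (1 / 2), 0 < weakConductanceProfile μ P v)
    (f : E → ℝ) (hf : Measurable f) (hf01 : ∀ x, f x ∈ Set.Icc (0 : ℝ) 1)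
    (hsup : essSup f μ = 1)
    (hzero : (1 / 2 : ℝ≥0∞) ≤ μ {x | f x = 0}) :
    ∀ r ∈ Set.Ioo (0 : ℝ) (1 / 2),
      (∫ x, f x ∂μ) - r
        ≤ sSup ((fun s => (s - r) / (s * weakConductanceProfile μ P s)) ''
              Set.Icc r (1 / 2))
          * ((1 / 2) * ∫ x, ∫ y, |f y - f x| ∂(P x) ∂μ) :=
  L1_WPI_from_weak_conductance_general μ P hinv hΦpos f hf hf01 hzero
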